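/- arXiv:0807.4655 — 4 statements merged into one kernel-verified Lean document; each statement's English description precedes it below -/
import Mathlib

section
/- In a candy-passing game on a finite graph G, a vertex v is called abundant if it holds at least 2·deg(v) candies. If a vertex is not abundant at the beginning of a round, then it is not abundant at the end of that round; hence the set of abundant vertices is (weakly) decreasing over the course of the game. -/
/-- One round of the candy-passing game. -/
def candyStep {V : Type*} [Fintype V] [DecidableEq V] (G : SimpleGraph V)
    [DecidableRel G.Adj] (f : V → ℕ) (v : V) : ℕ :=
  (if G.degree v ≤ f v then f v - G.degree v else f v) +
    ((G.neighborFinset v).filter (fun u => G.degree u ≤ f u)).card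

/-- A vertex that is not abundant (holds fewer than `2 * deg v` candies) at the
start of a round is still not abundant at the end of the round. -/
theorem stmt1 {V : Type*} [Fintype V] [DecidableEq V] (G : SimpleGraph V)
    [DecidableRel G.Adj] (f : V → ℕ) (v : V) (h : f v < 2 * G.degree v) :
    candyStep G f v < 2 * G.degree v := by
  have hc : ((G.neighborFinset v).filter (fun u => G.degree u ≤ f u)).card ≤ G.degree v := by
    calc _ ≤ (G.neighborFinset v).card := Finset.card_filter_le _ _
    _ = G.degree v := G.card_neighborFinset_eq_degree v
  unfold candyStep
  split_ifs with hd
  · omega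
  · omega
end

section
/- Let G be a finite graph and consider a candy-passing game on G with total number of candies c ≥ 4|E(G)| − |V(G)|. Then there exists a vertex v* that passes candy in every round of the game. -/
section Aux

variable {V : Type*} [Fintype V] [DecidableEq V] (G : SimpleGraph V) [DecidableRel G.Adj]

lemma candy_sum_nbr_filter (g : V → ℕ) :
    ∑ v, ((G.neighborFinset v).filter (fun u => G.degree u ≤ g u)).card
      = ∑ v, if G.degree v ≤ g v then G.degree v else 0 := by
  have h1 : ∀ v : V, ((G.neighborFinset v).filter (fun u => G.degree u ≤ g u)).card
      = ∑ u, if G.Adj v u ∧ G.degree u ≤ g u then 1 else 0 := by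
    intro v
    rw [Finset.card_filter, SimpleGraph.neighborFinset_eq_filter, Finset.sum_filter]
    apply Finset.sum_congr rfl
    intro u _
    by_cases h : G.Adj v u <;> simp [h]
  simp only [h1]
  rw [Finset.sum_comm]
  apply Finset.sum_congr rfl
  intro u _
  by_cases h : G.degree u ≤ g u
  · simp only [h, and_true, if_true]
    rw [← SimpleGraph.card_neighborFinset_eq_degree, SimpleGraph.neighborFinset_eq_filter,
      Finset.card_filter]
    apply Finset.sum_congr rfl
    intro v _
    simp [SimpleGraph.adj_comm]
  · simp [h]

lemma candy_conserve (g : V → ℕ) : ∑ v, candyStep G g v = ∑ v, g v := by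
  unfold candyStep
  rw [Finset.sum_add_distrib, candy_sum_nbr_filter, ← Finset.sum_add_distrib]
  apply Finset.sum_congr rfl
  intro v _
  split_ifs with h <;> omega

/-- the filtered card is at most the degree -/
lemma candy_filter_le (g : V → ℕ) (v : V) :
    ((G.neighborFinset v).filter (fun u => G.degree u ≤ g u)).card ≤ G.degree v := by
  rw [← SimpleGraph.card_neighborFinset_eq_degree]
  exact Finset.card_filter_le _ _

/-- non-abundance is preserved (abundant set shrinks). -/
lemma candy_shrink (g : V → ℕ) (v : V) (h : g v < 2 * G.degree v) :
    candyStep G g v < 2 * G.degree v := by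
  have hk := candy_filter_le G g v
  unfold candyStep
  split_ifs with h' <;> omega

/-- a frozen configuration stays frozen. -/
lemma candy_frozen (g : V → ℕ) (hg : ∀ v, g v = 2 * G.degree v - 1)
    (hd : ∀ v, 1 ≤ G.degree v) (v : V) : candyStep G g v = g v := by
  have hp : ∀ u : V, G.degree u ≤ g u := by
    intro u; have := hg u; have := hd u; omega
  unfold candyStep
  rw [if_pos (hp v)]
  have : ((G.neighborFinset v).filter (fun u => G.degree u ≤ g u))
      = G.neighborFinset v := Finset.filter_true_of_mem (fun u _ => hp u)
  rw [this, SimpleGraph.card_neighborFinset_eq_degree]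
  have := hg v; have := hd v; omega

end Aux

/-- In a candy-passing game with `c ≥ 4|E(G)| - |V(G)|` candies, some vertex
passes candy in every round. -/
theorem stmt4 {V : Type*} [Fintype V] [DecidableEq V] [Nonempty V]
    (G : SimpleGraph V) [DecidableRel G.Adj]
    (f : ℕ → V → ℕ) (hstep : ∀ t, f (t + 1) = candyStep G (f t))
    (c : ℕ) (hc : ∑ v, f 0 v = c)
    (hbig : 4 * G.edgeFinset.card ≤ c + Fintype.card V) :
    ∃ v : V, ∀ t, G.degree v ≤ f t v := by
  classical
  -- total candy is conserved
  have hsum : ∀ t, ∑ v, f t v = c := by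
    intro t
    induction t with
    | zero => exact hc
    | succ n ih => rw [hstep n, candy_conserve]; exact ih
  -- the abundant set
  set S : ℕ → Finset V := fun t => Finset.univ.filter (fun v => 2 * G.degree v ≤ f t v) with hS
  have hmemS : ∀ t v, v ∈ S t ↔ 2 * G.degree v ≤ f t v := by
    intro t v; simp [hS]
  -- the abundant set shrinks
  have hsub : ∀ t, S (t + 1) ⊆ S t := by
    intro t v hv
    rw [hmemS] at hv ⊢
    by_contra h
    push_neg at h
    rw [hstep t] at hv
    exact absurd hv (not_le.mpr (candy_shrink G (f t) v h))
  have hchain : ∀ s t : ℕ, s ≤ t → S t ⊆ S s := by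
    intro s t hst
    induction t with
    | zero =>
      have : s = 0 := by omega
      subst this; exact Finset.Subset.refl _
    | succ n ih =>
      rcases Nat.lt_or_ge s (n+1) with h | h
      · exact Finset.Subset.trans (hsub n) (ih (by omega))
      · have : s = n + 1 := by omega
        subst this; exact Finset.Subset.refl _
  -- if the abundant set is empty at time t, the configuration is frozen
  have hempty : ∀ t, S t = ∅ →
      (∀ v, f t v = 2 * G.degree v - 1) ∧ (∀ v, 1 ≤ G.degree v) := by
    intro t ht
    have hlt : ∀ v : V, f t v < 2 * G.degree v := by
      intro v
      by_contra h
      push_neg at h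
      have : v ∈ S t := (hmemS t v).mpr h
      simp [ht] at this
    have hdeg : ∀ v : V, 1 ≤ G.degree v := by
      intro v; have := hlt v; omega
    have hsumdeg : ∑ v : V, 2 * G.degree v = 4 * G.edgeFinset.card := by
      rw [← Finset.mul_sum, SimpleGraph.sum_degrees_eq_twice_card_edges]; ring
    have hkey : ∀ v : V, f t v + 1 = 2 * G.degree v := by
      by_contra h
      push_neg at h
      obtain ⟨v0, hv0⟩ := h
      have hle : ∀ v ∈ Finset.univ, f t v + 1 ≤ 2 * G.degree v := by
        intro v _; have := hlt v; omega
      have hstrict : f t v0 + 1 < 2 * G.degree v0 := by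
        have := hlt v0; omega
      have : ∑ v : V, (f t v + 1) < ∑ v : V, 2 * G.degree v :=
        Finset.sum_lt_sum hle ⟨v0, Finset.mem_univ v0, hstrict⟩
      rw [Finset.sum_add_distrib, Finset.sum_const, smul_eq_mul, mul_one, hsum t,
        hsumdeg] at this
      have : c + Fintype.card V < 4 * G.edgeFinset.card := by
        simpa [Finset.card_univ] using this
      omega
    exact ⟨fun v => by have := hkey v; omega, hdeg⟩
  -- frozen configurations stay frozen
  have hfrozen : ∀ t, S t = ∅ → ∀ s, t ≤ s → ∀ v, f s v = 2 * G.degree v - 1 := by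
    intro t ht s hts
    obtain ⟨hft, hdeg⟩ := hempty t ht
    induction s with
    | zero =>
      have : t = 0 := by omega
      subst this; exact hft
    | succ n ih =>
      rcases Nat.lt_or_ge t (n + 1) with h | h
      · have hn := ih (by omega)
        intro v
        rw [hstep n, candy_frozen G (f n) hn hdeg v]
        exact hn v
      · have : t = n + 1 := by omega
        subst this; exact hft
  by_cases hne : ∀ t, (S t).Nonempty
  · -- minimal cardinality is attained, set stabilizes
    have hset : (Set.range fun t => (S t).card).Nonempty := ⟨(S 0).card, 0, rfl⟩
    obtain ⟨T, hT⟩ := Nat.sInf_mem hset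
    have hmin : ∀ t, (S T).card ≤ (S t).card := by
      intro t
      simp only [] at hT
      rw [hT]
      exact Nat.sInf_le ⟨t, rfl⟩
    obtain ⟨v, hv⟩ := hne T
    refine ⟨v, fun t => ?_⟩
    have hvt : v ∈ S t := by
      rcases Nat.lt_or_ge t T with h | h
      · exact hchain t T (by omega) hv
      · have : S t = S T :=
          Finset.eq_of_subset_of_card_le (hchain T t h) (hmin t)
        rw [this]; exact hv
    have := (hmemS t v).mp hvt
    omega
  · push_neg at hne
    obtain ⟨T, hT⟩ := hne
    -- T0 := least time the abundant set is empty
    have hex : ∃ t, S t = ∅ := ⟨T, hT⟩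
    set T0 := Nat.find hex with hT0
    have hT0e : S T0 = ∅ := Nat.find_spec hex
    obtain ⟨_, hdeg⟩ := hempty T0 hT0e
    have hafter : ∀ s, T0 ≤ s → ∀ v, f s v = 2 * G.degree v - 1 :=
      hfrozen T0 hT0e
    rcases Nat.eq_zero_or_pos T0 with h0 | h0
    · obtain ⟨v⟩ := ‹Nonempty V›
      refine ⟨v, fun t => ?_⟩
      have := hafter t (by omega) v
      have := hdeg v
      omega
    · -- at time T0 - 1 the abundant set is nonempty
      have hne' : (S (T0 - 1)).Nonempty := by
        rw [Finset.nonempty_iff_ne_empty]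
        exact Nat.find_min hex (by omega)
      obtain ⟨v, hv⟩ := hne'
      refine ⟨v, fun t => ?_⟩
      rcases Nat.lt_or_ge t T0 with h | h
      · have : v ∈ S t := hchain t (T0 - 1) (by omega) hv
        have := (hmemS t v).mp this
        omega
      · have := hafter t h v
        have := hdeg v
        omega
end

section
/- Let G be a connected finite graph and consider a candy-passing game on G with c total candies. For adjacent vertices v and v', and any round t, the firing counts satisfy |u_t(v) − u_t(v')| ≤ c, where u_t(w) denotes the total number of rounds among the first t rounds in which w passed candy. -/
/-- Number of rounds among the first `t` rounds in which `w` passed candy. -/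
def passCount {V : Type*} [Fintype V] [DecidableEq V] (G : SimpleGraph V)
    [DecidableRel G.Adj] (f : ℕ → V → ℕ) (t : ℕ) (w : V) : ℕ :=
  ((Finset.range t).filter (fun s => G.degree w ≤ f s w)).card

section Aux

variable {V : Type*} [Fintype V] [DecidableEq V] (G : SimpleGraph V) [DecidableRel G.Adj]

lemma passCount_succ (f : ℕ → V → ℕ) (t : ℕ) (w : V) :
    passCount G f (t + 1) w = passCount G f t w + (if G.degree w ≤ f t w then 1 else 0) := by
  unfold passCount
  rw [Finset.range_add_one, Finset.filter_insert]
  split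
  · rw [Finset.card_insert_of_notMem (by simp)]
  · simp

/-- The chip equation. -/
lemma chipEq (f : ℕ → V → ℕ) (hstep : ∀ t, f (t + 1) = candyStep G (f t)) (t : ℕ) (w : V) :
    (f t w : ℤ) = (f 0 w : ℤ) + ∑ u ∈ G.neighborFinset w, (passCount G f t u : ℤ)
      - (G.degree w : ℤ) * passCount G f t w := by
  induction t with
  | zero => simp [passCount]
  | succ t ih =>
    rw [hstep t]
    unfold candyStep
    simp only [passCount_succ]
    push_cast [Finset.card_filter]
    rw [Finset.sum_add_distrib]
    split_ifs with h
    · push_cast [Nat.cast_sub h] at *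
      linarith [ih]
    · push_cast at *
      linarith [ih]

lemma key (f : ℕ → V → ℕ) (hstep : ∀ t, f (t + 1) = candyStep G (f t))
    (c : ℕ) (hc : ∑ v, f 0 v = c) (y z : V) (hadj : G.Adj y z) (t : ℕ) :
    (passCount G f t y : ℤ) - (passCount G f t z : ℤ) ≤ (c : ℤ) := by
  set u : V → ℤ := fun w => (passCount G f t w : ℤ) with hu
  by_cases hle : u y ≤ u z
  · have : (0 : ℤ) ≤ c := Int.natCast_nonneg c
    simp only [hu] at hle ⊢
    linarith
  push_neg at hle
  set S : Finset V := Finset.univ.filter (fun w => u y ≤ u w) with hS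
  have hyS : y ∈ S := by simp [hS]
  have hzS : z ∉ S := by simp [hS]; linarith
  -- chip equation summed over S
  have hchip : ∀ w ∈ S, (f 0 w : ℤ) - (f t w : ℤ)
      = ∑ x ∈ G.neighborFinset w, (u w - u x) := by
    intro w _
    have h1 := chipEq G f hstep t w
    rw [Finset.sum_sub_distrib, Finset.sum_const, ← SimpleGraph.card_neighborFinset_eq_degree,
      nsmul_eq_mul] at *
    simp only [hu]
    push_cast at *
    linarith
  -- split each neighborhood sum into the part inside S and outside S
  have hsplit : ∀ w : V, ∑ x ∈ G.neighborFinset w, (u w - u x)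
      = (∑ x ∈ (G.neighborFinset w).filter (· ∈ S), (u w - u x))
        + ∑ x ∈ (G.neighborFinset w).filter (· ∉ S), (u w - u x) := by
    intro w
    exact (Finset.sum_filter_add_sum_filter_not _ _ _).symm
  -- the inside part cancels
  have hNS : ∀ w : V, (G.neighborFinset w).filter (· ∈ S)
      = S.filter (fun x => G.Adj w x) := by
    intro w
    ext x
    simp [SimpleGraph.mem_neighborFinset, hS, and_comm]
  have hTzero : ∑ w ∈ S, ∑ x ∈ (G.neighborFinset w).filter (· ∈ S), (u w - u x) = 0 := by
    simp only [hNS, Finset.sum_filter]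
    set T := ∑ w ∈ S, ∑ x ∈ S, (if G.Adj w x then u w - u x else 0) with hT
    have hneg : T = -T := by
      calc T = ∑ w ∈ S, ∑ x ∈ S, -(if G.Adj x w then u x - u w else 0) := by
              apply Finset.sum_congr rfl; intro w _
              apply Finset.sum_congr rfl; intro x _
              by_cases h : G.Adj w x
              · rw [if_pos h, if_pos h.symm]; ring
              · rw [if_neg h, if_neg (fun h' => h h'.symm)]; ring
        _ = -∑ x ∈ S, ∑ w ∈ S, (if G.Adj x w then u x - u w else 0) := by
              rw [← Finset.sum_comm]
              simp [Finset.sum_neg_distrib]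
        _ = -T := by rw [hT]
    linarith
  -- the outside part is a sum of nonnegative terms including the edge (y, z)
  have houter : (u y - u z)
      ≤ ∑ w ∈ S, ∑ x ∈ (G.neighborFinset w).filter (· ∉ S), (u w - u x) := by
    have hterm : ∀ w ∈ S, (0 : ℤ) ≤ ∑ x ∈ (G.neighborFinset w).filter (· ∉ S), (u w - u x) := by
      intro w hw
      apply Finset.sum_nonneg
      intro x hx
      simp only [Finset.mem_filter, hS, Finset.mem_univ, true_and] at hw hx
      have hx2 : u x < u y := by
        by_contra hcon
        exact hx.2 (by simpa [hS] using not_lt.mp hcon)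
      linarith
    have hy : (u y - u z) ≤ ∑ x ∈ (G.neighborFinset y).filter (· ∉ S), (u y - u x) := by
      apply Finset.single_le_sum (f := fun x => u y - u x)
      · intro x hx
        simp only [Finset.mem_filter] at hx
        have hx2 : u x < u y := by
          by_contra hcon
          exact hx.2 (by simpa [hS] using not_lt.mp hcon)
        linarith
      · simp only [Finset.mem_filter]
        exact ⟨(SimpleGraph.mem_neighborFinset G y z).2 hadj, hzS⟩
    calc (u y - u z) ≤ ∑ x ∈ (G.neighborFinset y).filter (· ∉ S), (u y - u x) := hy
      _ ≤ ∑ w ∈ S, ∑ x ∈ (G.neighborFinset w).filter (· ∉ S), (u w - u x) :=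
          Finset.single_le_sum (fun w hw => hterm w hw) hyS
  -- combine
  have hsum : ∑ w ∈ S, ((f 0 w : ℤ) - (f t w : ℤ))
      = ∑ w ∈ S, ∑ x ∈ (G.neighborFinset w).filter (· ∉ S), (u w - u x) := by
    calc ∑ w ∈ S, ((f 0 w : ℤ) - (f t w : ℤ))
        = ∑ w ∈ S, ∑ x ∈ G.neighborFinset w, (u w - u x) :=
          Finset.sum_congr rfl hchip
      _ = (∑ w ∈ S, ∑ x ∈ (G.neighborFinset w).filter (· ∈ S), (u w - u x))
          + ∑ w ∈ S, ∑ x ∈ (G.neighborFinset w).filter (· ∉ S), (u w - u x) := by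
          rw [← Finset.sum_add_distrib]
          exact Finset.sum_congr rfl (fun w _ => hsplit w)
      _ = _ := by rw [hTzero]; ring
  have hbound : ∑ w ∈ S, ((f 0 w : ℤ) - (f t w : ℤ)) ≤ (c : ℤ) := by
    calc ∑ w ∈ S, ((f 0 w : ℤ) - (f t w : ℤ))
        ≤ ∑ w ∈ S, (f 0 w : ℤ) := by
          apply Finset.sum_le_sum
          intro w _
          have : (0 : ℤ) ≤ (f t w : ℤ) := Int.natCast_nonneg _
          linarith
      _ ≤ ∑ w : V, (f 0 w : ℤ) := by
          apply Finset.sum_le_sum_of_subset_of_nonneg (Finset.subset_univ S)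
          intro w _ _
          exact Int.natCast_nonneg _
      _ = (c : ℤ) := by rw [← hc]; push_cast; rfl
  have : u y - u z ≤ (c : ℤ) := by
    calc u y - u z ≤ ∑ w ∈ S, ∑ x ∈ (G.neighborFinset w).filter (· ∉ S), (u w - u x) := houter
      _ = ∑ w ∈ S, ((f 0 w : ℤ) - (f t w : ℤ)) := hsum.symm
      _ ≤ (c : ℤ) := hbound
  simpa [hu] using this

end Aux

/-- Tardos's lemma: for adjacent vertices the firing counts differ by at most
the total number `c` of candies. -/
theorem stmt5 {V : Type*} [Fintype V] [DecidableEq V]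
    (G : SimpleGraph V) [DecidableRel G.Adj] (hconn : G.Connected)
    (f : ℕ → V → ℕ) (hstep : ∀ t, f (t + 1) = candyStep G (f t))
    (c : ℕ) (hc : ∑ v, f 0 v = c)
    (v v' : V) (hadj : G.Adj v v') (t : ℕ) :
    |(passCount G f t v : ℤ) - (passCount G f t v' : ℤ)| ≤ (c : ℤ) := by
  rw [abs_sub_le_iff]
  exact ⟨key G f hstep c hc v v' hadj t, key G f hstep c hc v' v hadj.symm t⟩
end

section
/- Let G be a connected finite graph with diameter d. In any candy-passing game on G with c ≥ 4|E(G)| − |V(G)| candies, after at most |V(G)|·d·c rounds every vertex passes candy in every subsequent round; in particular, the configuration stabilizes (never changes again) within |V(G)|·d·c rounds. -/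
set_option linter.unusedSectionVars false
set_option maxHeartbeats 1000000

namespace CandyAux
variable {V : Type*} [Fintype V] [DecidableEq V] (G : SimpleGraph V) [DecidableRel G.Adj]

lemma cp_step (f : V → ℕ) (v : V) :
    candyStep G f v + (if G.degree v ≤ f v then G.degree v else 0)
      = f v + ((G.neighborFinset v).filter (fun u => G.degree u ≤ f u)).card := by
  unfold candyStep
  have h := Finset.card_filter_le (G.neighborFinset v) (fun u => G.degree u ≤ f u)
  rw [G.card_neighborFinset_eq_degree] at h
  split <;> omega

lemma cp_handshake (P : V → Prop) [DecidablePred P] :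
    ∑ v, ((G.neighborFinset v).filter (fun u => P u)).card
      = ∑ v, (if P v then G.degree v else 0) := by
  have key : ∀ v, ((G.neighborFinset v).filter (fun u => P u)).card
      = ∑ u, if G.Adj v u ∧ P u then 1 else 0 := by
    intro v
    have h : (G.neighborFinset v).filter (fun u => P u)
        = Finset.univ.filter (fun u => G.Adj v u ∧ P u) := by
      ext u; simp [SimpleGraph.mem_neighborFinset]
    rw [h, Finset.card_filter]
  simp only [key]
  rw [Finset.sum_comm]
  refine Finset.sum_congr rfl fun u _ => ?_
  by_cases hP : P u
  · simp only [hP, and_true, if_pos]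
    have h2 : Finset.univ.filter (fun v => G.Adj v u) = G.neighborFinset u := by
      ext w; simp [SimpleGraph.mem_neighborFinset, G.adj_comm]
    rw [← Finset.card_filter, h2, G.card_neighborFinset_eq_degree]
  · simp [hP]

lemma cp_antisym (g : V → ℤ) (A : Finset V) :
    ∑ v ∈ A, ∑ u ∈ (G.neighborFinset v).filter (fun u => u ∈ A), (g u - g v) = 0 := by
  classical
  have hnb : ∀ v : V, G.neighborFinset v = Finset.univ.filter (G.Adj v) := by
    intro v; ext u; simp [SimpleGraph.mem_neighborFinset]
  have step1 : ∑ v ∈ A, ∑ u ∈ (G.neighborFinset v).filter (fun u => u ∈ A), (g u - g v)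
      = ∑ v, ∑ u, if v ∈ A ∧ G.Adj v u ∧ u ∈ A then g u - g v else 0 := by
    have huniv : ∀ (h : V → ℤ), ∑ v ∈ A, h v = ∑ v, if v ∈ A then h v else 0 := by
      intro h
      rw [Finset.sum_ite_mem, Finset.univ_inter]
    rw [huniv]
    refine Finset.sum_congr rfl fun v _ => ?_
    have hin : ∑ u ∈ (G.neighborFinset v).filter (fun u => u ∈ A), (g u - g v)
        = ∑ u, if G.Adj v u ∧ u ∈ A then g u - g v else 0 := by
      rw [hnb, Finset.filter_filter, Finset.sum_filter]
    by_cases h1 : v ∈ A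
    · rw [if_pos h1, hin]
      refine Finset.sum_congr rfl fun u _ => ?_
      by_cases h2 : G.Adj v u <;> by_cases h3 : u ∈ A <;> simp [h1, h2, h3]
    · rw [if_neg h1]
      refine (Finset.sum_eq_zero fun u _ => ?_).symm
      simp [h1]
  rw [step1]
  have hanti : ∀ v u : V, (if u ∈ A ∧ G.Adj u v ∧ v ∈ A then g v - g u else 0)
      = -(if v ∈ A ∧ G.Adj v u ∧ u ∈ A then g u - g v else 0) := by
    intro v u
    have hiff : (u ∈ A ∧ G.Adj u v ∧ v ∈ A) ↔ (v ∈ A ∧ G.Adj v u ∧ u ∈ A) := by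
      constructor <;> rintro ⟨a, b, c⟩ <;> exact ⟨c, b.symm, a⟩
    by_cases h : v ∈ A ∧ G.Adj v u ∧ u ∈ A
    · rw [if_pos (hiff.mpr h), if_pos h]; ring
    · rw [if_neg (fun hc => h (hiff.mp hc)), if_neg h, neg_zero]
  have hswap : ∑ v, ∑ u, (if v ∈ A ∧ G.Adj v u ∧ u ∈ A then g u - g v else 0)
      = ∑ v, ∑ u, (if u ∈ A ∧ G.Adj u v ∧ v ∈ A then g v - g u else 0) :=
    Finset.sum_comm
  have hneg : ∑ v, ∑ u, (if v ∈ A ∧ G.Adj v u ∧ u ∈ A then g u - g v else 0)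
      = -∑ v, ∑ u, (if v ∈ A ∧ G.Adj v u ∧ u ∈ A then g u - g v else 0) := by
    nth_rewrite 1 [hswap]
    rw [← Finset.sum_neg_distrib]
    refine Finset.sum_congr rfl fun v _ => ?_
    rw [← Finset.sum_neg_distrib]
    exact Finset.sum_congr rfl fun u _ => hanti v u
  linarith

variable (f : ℕ → V → ℕ)

/-- number of rounds `< T` in which `v` passes -/
def fireCnt (v : V) (T : ℕ) : ℕ :=
  ((Finset.range T).filter (fun t => G.degree v ≤ f t v)).card

/-- number of rounds `< T` in which `v` does not pass -/
def idleCnt (v : V) (T : ℕ) : ℕ :=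
  ((Finset.range T).filter (fun t => ¬ G.degree v ≤ f t v)).card

lemma cp_fire_add_idle (v : V) (T : ℕ) : fireCnt G f v T + idleCnt G f v T = T := by
  unfold fireCnt idleCnt
  rw [Finset.card_filter_add_card_filter_not, Finset.card_range]

variable (hstep : ∀ t, f (t + 1) = candyStep G (f t))

include hstep in
lemma cp_conserve : ∀ t, ∑ v, f t v = ∑ v, f 0 v := by
  intro t
  induction t with
  | zero => rfl
  | succ t ih =>
    rw [← ih]
    have h1 : ∀ v, f (t+1) v + (if G.degree v ≤ f t v then G.degree v else 0)
        = f t v + ((G.neighborFinset v).filter (fun u => G.degree u ≤ f t u)).card := by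
      intro v; rw [hstep t]; exact cp_step G (f t) v
    have h2 : ∑ v, f (t+1) v + ∑ v, (if G.degree v ≤ f t v then G.degree v else 0)
        = ∑ v, f t v + ∑ v, ((G.neighborFinset v).filter (fun u => G.degree u ≤ f t u)).card := by
      rw [← Finset.sum_add_distrib, ← Finset.sum_add_distrib]
      exact Finset.sum_congr rfl fun v _ => h1 v
    rw [cp_handshake G (fun u => G.degree u ≤ f t u)] at h2
    omega

include hstep in
lemma cp_fire_identity : ∀ (T : ℕ) (v : V),
    f T v + G.degree v * fireCnt G f v T
      = f 0 v + ∑ u ∈ G.neighborFinset v, fireCnt G f u T := by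
  intro T
  induction T with
  | zero => intro v; simp [fireCnt]
  | succ T ih =>
    intro v
    have hcnt : ∀ w, fireCnt G f w (T+1)
        = fireCnt G f w T + (if G.degree w ≤ f T w then 1 else 0) := by
      intro w
      unfold fireCnt
      rw [Finset.range_add_one, Finset.filter_insert]
      by_cases hw : G.degree w ≤ f T w
      · rw [if_pos hw, if_pos hw, Finset.card_insert_of_notMem (by simp)]
      · rw [if_neg hw, if_neg hw, Nat.add_zero]
    have hsum : ∑ u ∈ G.neighborFinset v, fireCnt G f u (T+1)
        = (∑ u ∈ G.neighborFinset v, fireCnt G f u T)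
          + ((G.neighborFinset v).filter (fun u => G.degree u ≤ f T u)).card := by
      rw [Finset.card_filter, ← Finset.sum_add_distrib]
      exact Finset.sum_congr rfl fun u _ => hcnt u
    have h1 : f (T+1) v + (if G.degree v ≤ f T v then G.degree v else 0)
        = f T v + ((G.neighborFinset v).filter (fun u => G.degree u ≤ f T u)).card := by
      rw [hstep T]; exact cp_step G (f T) v
    have h2 := ih v
    rw [hcnt v, hsum]
    by_cases hfire : G.degree v ≤ f T v
    · simp only [hfire, if_pos] at h1 ⊢
      rw [Nat.mul_add, Nat.mul_one]
      omega
    · simp only [hfire, if_neg, if_false, Nat.add_zero] at h1 ⊢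
      omega

include hstep in
lemma cp_edge_bound {x y : V} (hxy : G.Adj x y) (T : ℕ) :
    fireCnt G f y T ≤ fireCnt G f x T + ∑ v, f 0 v := by
  classical
  by_cases htriv : fireCnt G f y T ≤ fireCnt G f x T
  · omega
  push_neg at htriv
  set g : V → ℤ := fun v => (fireCnt G f v T : ℤ) with hg
  have hident : ∀ v, ∑ u ∈ G.neighborFinset v, (g u - g v) = (f T v : ℤ) - f 0 v := by
    intro v
    have h := cp_fire_identity G f hstep T v
    have hcast := congrArg (fun n : ℕ => (n : ℤ)) h
    push_cast at hcast
    have hrw : ∑ u ∈ G.neighborFinset v, (g u - g v)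
        = (∑ u ∈ G.neighborFinset v, g u) - (G.degree v : ℤ) * g v := by
      rw [Finset.sum_sub_distrib, Finset.sum_const, ← G.card_neighborFinset_eq_degree]
      simp only [nsmul_eq_mul]
    rw [hrw]
    simp only [hg] at *
    linarith
  set A : Finset V := Finset.univ.filter (fun v => g x < g v) with hA
  have hmemA : ∀ v, v ∈ A ↔ g x < g v := by intro v; simp [hA]
  have hyA : y ∈ A := (hmemA y).mpr (by simp only [hg]; exact_mod_cast htriv)
  have hxA : x ∉ A := fun h => lt_irrefl _ ((hmemA x).mp h)
  have hsplit : ∀ v, ∑ u ∈ G.neighborFinset v, (g u - g v)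
      = (∑ u ∈ (G.neighborFinset v).filter (fun u => u ∈ A), (g u - g v))
        + (∑ u ∈ (G.neighborFinset v).filter (fun u => ¬ u ∈ A), (g u - g v)) :=
    fun v => (Finset.sum_filter_add_sum_filter_not _ _ _).symm
  have hcross : ∑ v ∈ A, ∑ u ∈ (G.neighborFinset v).filter (fun u => ¬ u ∈ A), (g u - g v)
      = ∑ v ∈ A, ((f T v : ℤ) - f 0 v) := by
    have h1 : ∑ v ∈ A, ∑ u ∈ G.neighborFinset v, (g u - g v)
        = ∑ v ∈ A, ((f T v : ℤ) - f 0 v) :=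
      Finset.sum_congr rfl fun v _ => hident v
    have h2 : ∑ v ∈ A, ∑ u ∈ G.neighborFinset v, (g u - g v)
        = (∑ v ∈ A, ∑ u ∈ (G.neighborFinset v).filter (fun u => u ∈ A), (g u - g v))
          + ∑ v ∈ A, ∑ u ∈ (G.neighborFinset v).filter (fun u => ¬ u ∈ A), (g u - g v) := by
      rw [← Finset.sum_add_distrib]
      exact Finset.sum_congr rfl fun v _ => hsplit v
    rw [cp_antisym G g A] at h2
    linarith
  have hlb : -(∑ v, (f 0 v : ℤ)) ≤ ∑ v ∈ A, ((f T v : ℤ) - f 0 v) := by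
    rw [Finset.sum_sub_distrib]
    have h1 : (0:ℤ) ≤ ∑ v ∈ A, (f T v : ℤ) := Finset.sum_nonneg fun v _ => by positivity
    have h2 : ∑ v ∈ A, (f 0 v : ℤ) ≤ ∑ v, (f 0 v : ℤ) :=
      Finset.sum_le_sum_of_subset_of_nonneg (Finset.subset_univ A) (fun v _ _ => by positivity)
    linarith
  have hterm : ∀ v ∈ A, ∀ u ∈ (G.neighborFinset v).filter (fun u => ¬ u ∈ A), g u - g v ≤ 0 := by
    intro v hv u hu
    rw [Finset.mem_filter] at hu
    have h1 : g x < g v := (hmemA v).mp hv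
    have h2 : ¬ g x < g u := fun h => hu.2 ((hmemA u).mpr h)
    push_neg at h2
    linarith
  set h : V → ℤ := fun v => ∑ u ∈ (G.neighborFinset v).filter (fun u => ¬ u ∈ A), (g u - g v)
    with hh
  have hcross_le : ∑ v ∈ A, h v ≤ h y := by
    rw [← Finset.add_sum_erase A h hyA]
    have : ∑ v ∈ A.erase y, h v ≤ 0 :=
      Finset.sum_nonpos fun v hv =>
        Finset.sum_nonpos fun u hu => hterm v (Finset.mem_of_mem_erase hv) u hu
    linarith
  have hxmem : x ∈ (G.neighborFinset y).filter (fun u => ¬ u ∈ A) := by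
    rw [Finset.mem_filter, SimpleGraph.mem_neighborFinset]
    exact ⟨hxy.symm, hxA⟩
  have hy_le : h y ≤ g x - g y := by
    rw [hh]
    simp only
    rw [← Finset.add_sum_erase _ _ hxmem]
    have : ∑ u ∈ ((G.neighborFinset y).filter (fun u => ¬ u ∈ A)).erase x, (g u - g y) ≤ 0 :=
      Finset.sum_nonpos fun u hu => hterm y hyA u (Finset.mem_of_mem_erase hu)
    linarith
  have final : (fireCnt G f y T : ℤ) ≤ fireCnt G f x T + ∑ v, (f 0 v : ℤ) := by
    have hchain : -(∑ v, (f 0 v : ℤ)) ≤ g x - g y := by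
      calc -(∑ v, (f 0 v : ℤ)) ≤ ∑ v ∈ A, ((f T v : ℤ) - f 0 v) := hlb
        _ = ∑ v ∈ A, h v := hcross.symm
        _ ≤ h y := hcross_le
        _ ≤ g x - g y := hy_le
    simp only [hg] at hchain
    linarith
  push_cast at final
  exact_mod_cast final

include hstep in
lemma cp_walk_bound {x v : V} (p : G.Walk x v) (T : ℕ) :
    fireCnt G f x T ≤ fireCnt G f v T + (∑ w, f 0 w) * p.length := by
  induction p with
  | nil => simp
  | @cons a b w hab q ih =>
    have h1 : fireCnt G f a T ≤ fireCnt G f b T + ∑ w, f 0 w :=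
      cp_edge_bound G f hstep hab.symm T
    rw [SimpleGraph.Walk.length_cons, Nat.mul_add, Nat.mul_one]
    omega

include hstep in
lemma cp_cap (t : ℕ) (v : V) (h : f t v ≤ 2 * G.degree v - 1) :
    f (t+1) v ≤ 2 * G.degree v - 1 := by
  rw [hstep t]
  unfold candyStep
  have hR := Finset.card_filter_le (G.neighborFinset v) (fun u => G.degree u ≤ f t u)
  rw [G.card_neighborFinset_eq_degree] at hR
  split <;> omega

include hstep in
lemma cp_cap_mono {s t : ℕ} (hst : s ≤ t) (v : V) (h : f s v ≤ 2 * G.degree v - 1) :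
    f t v ≤ 2 * G.degree v - 1 := by
  induction t, hst using Nat.le_induction with
  | base => exact h
  | succ t hst ih => exact cp_cap G f hstep t v ih

include hstep in
lemma cp_fix (t : ℕ) (hall : ∀ v, G.degree v ≤ f t v) : f (t+1) = f t := by
  funext v
  rw [hstep t]
  unfold candyStep
  rw [if_pos (hall v), Finset.filter_true_of_mem (fun u _ => hall u),
    G.card_neighborFinset_eq_degree]
  have := hall v
  omega

include hstep in
lemma cp_fix_forever {t0 : ℕ} (hall : ∀ v, G.degree v ≤ f t0 v) :
    ∀ t, t0 ≤ t → f t = f t0 ∧ ∀ v, G.degree v ≤ f t v := by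
  intro t ht
  induction t, ht using Nat.le_induction with
  | base => exact ⟨rfl, hall⟩
  | succ t hst ih =>
    have h1 : f (t+1) = f t := cp_fix G f hstep t ih.2
    exact ⟨h1.trans ih.1, fun v => h1 ▸ ih.2 v⟩

end CandyAux

/-- Main theorem: with `c ≥ 4|E(G)| - |V(G)|` candies on a connected graph of
diameter `d`, after at most `|V|·d·c` rounds every vertex passes in every
round and the configuration never changes again. -/
theorem stmt7 {V : Type*} [Fintype V] [DecidableEq V]
    (G : SimpleGraph V) [DecidableRel G.Adj] (hconn : G.Connected)
    (d : ℕ) (hd : d = G.diam)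
    (f : ℕ → V → ℕ) (hstep : ∀ t, f (t + 1) = candyStep G (f t))
    (c : ℕ) (hc : ∑ v, f 0 v = c)
    (hbig : 4 * G.edgeFinset.card ≤ c + Fintype.card V) :
    ∀ t, Fintype.card V * d * c ≤ t →
      (∀ v, G.degree v ≤ f t v) ∧ f t = f (Fintype.card V * d * c) := by
  classical
  open CandyAux in
  set n := Fintype.card V with hn
  set T := n * d * c with hT
  by_cases hcard : n ≤ 1
  · -- trivial graph: at most one vertex, every degree is 0 and f is constant
    have hsub : Subsingleton V := by
      rw [hn] at hcard
      exact Fintype.card_le_one_iff_subsingleton.mp hcard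
    have hdeg0 : ∀ v, G.degree v = 0 := by
      intro v
      rw [← SimpleGraph.card_neighborFinset_eq_degree, Finset.card_eq_zero]
      ext u
      simp only [SimpleGraph.mem_neighborFinset, Finset.notMem_empty, iff_false]
      intro hadj
      exact G.irrefl (Subsingleton.elim u v ▸ hadj)
    have hconstd : ∀ t, f t = f 0 := by
      intro t
      induction t with
      | zero => rfl
      | succ t ih =>
        rw [hstep t, ← ih]
        funext v
        unfold candyStep
        rw [hdeg0 v]
        simp only [Nat.zero_le, if_pos, Nat.sub_zero]
        have : G.neighborFinset v = ∅ := by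
          rw [← Finset.card_eq_zero, SimpleGraph.card_neighborFinset_eq_degree]
          exact hdeg0 v
        rw [this]
        simp
    intro t ht
    refine ⟨fun v => by rw [hdeg0 v]; exact Nat.zero_le _, ?_⟩
    rw [hconstd t, hconstd T]
  · -- main case
    push_neg at hcard
    have hnt : Nontrivial V := by
      rw [hn] at hcard
      exact Fintype.one_lt_card_iff_nontrivial.mp hcard
    have hdeg1 : ∀ v, 1 ≤ G.degree v := by
      intro v
      obtain ⟨w, hw⟩ := exists_ne v
      obtain ⟨p⟩ := hconn v w
      cases p with
      | nil => exact absurd rfl hw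
      | cons hadj q => exact (G.degree_pos_iff_exists_adj v).mpr ⟨_, hadj⟩
    have hediam : G.ediam ≠ ⊤ := by
      have : Nonempty V := hconn.nonempty
      obtain ⟨u, v, huv⟩ := G.exists_edist_eq_ediam_of_finite
      rw [← huv]
      exact SimpleGraph.edist_ne_top_iff_reachable.mpr (hconn u v)
    have hd1 : 1 ≤ d := by
      rw [hd]
      by_contra hcon
      push_neg at hcon
      interval_cases h : G.diam
      · rcases SimpleGraph.diam_eq_zero.mp h with h' | h'
        · exact hediam h'
        · exact not_subsingleton V h'
    have hcapsum : ∑ v, (2 * G.degree v - 1) ≤ c := by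
      have h2E := G.sum_degrees_eq_twice_card_edges
      have hsum1 : ∑ v, (2 * G.degree v - 1) + n = ∑ v, 2 * G.degree v := by
        rw [hn, ← Finset.card_univ, Finset.card_eq_sum_ones, ← Finset.sum_add_distrib]
        exact Finset.sum_congr rfl fun v _ => by have := hdeg1 v; omega
      have hsum2 : ∑ v, 2 * G.degree v = 2 * ∑ v, G.degree v := by
        rw [Finset.mul_sum]
      omega
    have hc1 : 1 ≤ c := by
      have : 1 ≤ ∑ v, (2 * G.degree v - 1) := by
        obtain ⟨v⟩ := hconn.nonempty
        calc 1 ≤ 2 * G.degree v - 1 := by have := hdeg1 v; omega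
          _ ≤ ∑ v, (2 * G.degree v - 1) :=
            Finset.single_le_sum (f := fun w => 2 * G.degree w - 1)
              (fun w _ => Nat.zero_le _) (Finset.mem_univ v)
      omega
    -- main claim: there is an all-fire round t0 < T
    have hmain : ∃ t0, t0 < T ∧ ∀ v, G.degree v ≤ f t0 v := by
      by_contra hno
      push_neg at hno
      -- every round < T is bad
      have hbad : ∀ t, t < T → ∃ v, f t v < G.degree v := by
        intro t ht
        obtain ⟨v, hv⟩ := hno t ht
        exact ⟨v, by omega⟩
      have hTpos : 1 ≤ T := by
        rw [hT]
        have : 1 ≤ n := by omega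
        calc 1 = 1 * 1 * 1 := rfl
          _ ≤ n * d * c := Nat.mul_le_mul (Nat.mul_le_mul this hd1) hc1
      -- abundant vertex at round T-1
      have habund : ∃ w, 2 * G.degree w ≤ f (T-1) w := by
        by_contra hcon
        push_neg at hcon
        obtain ⟨v, hv⟩ := hbad (T-1) (by omega)
        have hconsv := cp_conserve G f hstep (T-1)
        rw [hc] at hconsv
        have hlt : ∑ w, f (T-1) w < ∑ w, (2 * G.degree w - 1) := by
          apply Finset.sum_lt_sum (fun w _ => by have := hcon w; omega)
          exact ⟨v, Finset.mem_univ v, by have := hdeg1 v; have := hcon v; omega⟩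
        omega
      obtain ⟨vs, hvs⟩ := habund
      -- vs passes at every round < T
      have hvsfire : ∀ t, t < T → G.degree vs ≤ f t vs := by
        intro t ht
        by_contra hcon
        push_neg at hcon
        have hcap : f t vs ≤ 2 * G.degree vs - 1 := by omega
        have := cp_cap_mono G f hstep (show t ≤ T - 1 by omega) vs hcap
        have := hdeg1 vs
        omega
      have hvscnt : fireCnt G f vs T = T := by
        unfold fireCnt
        rw [Finset.filter_true_of_mem fun t ht => hvsfire t (Finset.mem_range.mp ht),
          Finset.card_range]
      -- every vertex idles at most c * d rounds
      have hidle : ∀ v, idleCnt G f v T ≤ c * d := by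
        intro v
        obtain ⟨p, hp⟩ := hconn.exists_walk_length_eq_dist vs v
        have hwb := cp_walk_bound G f hstep p T
        rw [hvscnt, hc, hp] at hwb
        have hdle : G.dist vs v ≤ d := hd ▸ SimpleGraph.dist_le_diam hediam
        have h1 : c * G.dist vs v ≤ c * d := Nat.mul_le_mul_left c hdle
        have h2 := cp_fire_add_idle G f v T
        omega
      have hidle0 : idleCnt G f vs T = 0 := by
        have := cp_fire_add_idle G f vs T
        omega
      -- total idleness is at least T
      have hidlesum : T ≤ ∑ v, idleCnt G f v T := by
        have hswap : ∑ v, idleCnt G f v T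
            = ∑ t ∈ Finset.range T, ∑ v, (if ¬ G.degree v ≤ f t v then 1 else 0) := by
          unfold idleCnt
          simp only [Finset.card_filter]
          rw [Finset.sum_comm]
        rw [hswap]
        calc T = ∑ _t ∈ Finset.range T, 1 := by rw [Finset.sum_const, Finset.card_range, smul_eq_mul, Nat.mul_one]
          _ ≤ ∑ t ∈ Finset.range T, ∑ v, (if ¬ G.degree v ≤ f t v then 1 else 0) := by
            apply Finset.sum_le_sum
            intro t ht
            obtain ⟨v, hv⟩ := hbad t (Finset.mem_range.mp ht)
            calc 1 = if ¬ G.degree v ≤ f t v then 1 else 0 := by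
                  rw [if_pos (by omega)]
              _ ≤ ∑ v, (if ¬ G.degree v ≤ f t v then 1 else 0) :=
                  Finset.single_le_sum (f := fun w => if ¬ G.degree w ≤ f t w then 1 else 0)
                    (fun w _ => by positivity) (Finset.mem_univ v)
      -- but total idleness is at most (n-1) * (c*d)
      have hub : ∑ v, idleCnt G f v T ≤ (n - 1) * (c * d) := by
        rw [← Finset.add_sum_erase Finset.univ _ (Finset.mem_univ vs), hidle0, Nat.zero_add]
        calc ∑ v ∈ Finset.univ.erase vs, idleCnt G f v T
            ≤ (Finset.univ.erase vs).card • (c * d) :=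
              Finset.sum_le_card_nsmul _ _ _ fun v _ => hidle v
          _ = (n - 1) * (c * d) := by
              rw [Finset.card_erase_of_mem (Finset.mem_univ vs), Finset.card_univ, ← hn,
                smul_eq_mul]
      have hcd : 1 ≤ c * d := Nat.mul_le_mul hc1 hd1
      have hident : n * d * c = (n - 1) * (c * d) + c * d := by
        obtain ⟨m, hm⟩ : ∃ m, n = m + 1 := ⟨n - 1, by omega⟩
        rw [hm]
        simp only [Nat.add_sub_cancel]
        ring
      omega
    -- conclude
    obtain ⟨t0, ht0T, hall⟩ := hmain
    intro t ht
    have h1 := cp_fix_forever G f hstep hall t (by omega)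
    have h2 := cp_fix_forever G f hstep hall T (by omega)
    exact ⟨h1.2, h1.1.trans h2.1.symm⟩
end
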